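/- Let $k$ and $n$ be positive integers with $n \geq k+2$. The graph $K_1 \vee (K_{n-k-2} \cup (k+1)K_1)$ contains no spanning tree with leaf degree at most $k$. -/

import Mathlib

/-- The signless Laplacian matrix `Q(G) = D(G) + A(G)` of a simple graph, over `ℝ`. -/
noncomputable def signlessLap {V : Type*} [Fintype V] [DecidableEq V] (G : SimpleGraph V) :
    Matrix V V ℝ :=
  letI : DecidableRel G.Adj := Classical.decRel _
  G.degMatrix ℝ + G.adjMatrix ℝ

/-- The signless Laplacian spectral radius `q(G)`: the largest eigenvalue of `Q(G)`. -/
noncomputable def qRadius {V : Type*} [Fintype V] [DecidableEq V] (G : SimpleGraph V) : ℝ :=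
  sSup (spectrum ℝ (signlessLap G))

/-- `G` has a spanning tree whose leaf degree is at most `k`, i.e. a spanning tree `T`
in which every vertex is adjacent (in `T`) to at most `k` leaves of `T`. -/
def HasSpanningTreeWithLeafDegLE {V : Type*} (G : SimpleGraph V) (k : ℕ) : Prop :=
  ∃ T : SimpleGraph V, T ≤ G ∧ T.IsTree ∧
    ∀ v : V, {u : V | T.Adj v u ∧ (T.neighborSet u).ncard = 1}.ncard ≤ k

/-- The join `G ∨ H` of two vertex-disjoint graphs: all edges between the two parts. -/
def SimpleGraph.graphJoin {α β : Type*} (G : SimpleGraph α) (H : SimpleGraph β) :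
    SimpleGraph (α ⊕ β) where
  Adj x y :=
    match x, y with
    | Sum.inl a, Sum.inl b => G.Adj a b
    | Sum.inr a, Sum.inr b => H.Adj a b
    | Sum.inl _, Sum.inr _ => True
    | Sum.inr _, Sum.inl _ => True
  symm := ⟨by rintro (a | a) (b | b) h <;> first | trivial | exact G.adj_symm h | exact H.adj_symm h⟩
  loopless := ⟨by rintro (a | a) h <;> first | exact G.loopless.irrefl _ h | exact H.loopless.irrefl _ h⟩

/-- The disjoint union `G ∪ H` of two vertex-disjoint graphs. -/
def SimpleGraph.graphDisjUnion {α β : Type*} (G : SimpleGraph α) (H : SimpleGraph β) :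
    SimpleGraph (α ⊕ β) where
  Adj x y :=
    match x, y with
    | Sum.inl a, Sum.inl b => G.Adj a b
    | Sum.inr a, Sum.inr b => H.Adj a b
    | _, _ => False
  symm := ⟨by rintro (a | a) (b | b) h <;> first | trivial | exact G.adj_symm h | exact H.adj_symm h⟩
  loopless := ⟨by rintro (a | a) h <;> first | exact G.loopless.irrefl _ h | exact H.loopless.irrefl _ h⟩

/-!
In any spanning tree `T ≤ G`, a vertex whose only `G`-neighbour is `c` must be a leaf of `T`
hanging at `c`. In `K₁ ∨ (K_(n-k-2) ∪ (k+1)K₁)` the `k + 1` isolated vertices of the union are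
adjacent only to the apex, so every spanning tree gives the apex leaf degree at least `k + 1`.
-/

open SimpleGraph

lemma SimpleGraph.Preconnected.neighborSet_eq_singleton_of_subset {V : Type*}
    {T : SimpleGraph V} (hT : T.Preconnected) {v c : V} (hvc : v ≠ c)
    (hsub : T.neighborSet v ⊆ {c}) : T.neighborSet v = {c} :=
  haveI : Nontrivial V := ⟨⟨v, c, hvc⟩⟩
  ((neighborSet_nonempty T).2 (hT.not_isIsolated v)).subset_singleton_iff.1 hsub

theorem not_hasSpanningTreeWithLeafDegLE_of_pendant {V : Type*} [Finite V]
    {G : SimpleGraph V} {k : ℕ} (c : V) (S : Set V) (hcS : c ∉ S)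
    (hS : ∀ s ∈ S, G.neighborSet s ⊆ {c}) (hS_card : k < S.ncard) :
    ¬ HasSpanningTreeWithLeafDegLE G k := by
  rintro ⟨T, hTG, hT, hleaf⟩
  have hleaves : S ⊆ {u | T.Adj c u ∧ (T.neighborSet u).ncard = 1} := by
    intro s hs
    have hN : T.neighborSet s = {c} :=
      hT.connected.preconnected.neighborSet_eq_singleton_of_subset (ne_of_mem_of_not_mem hs hcS)
        ((neighborSet_mono hTG s).trans (hS s hs))
    have hsc : T.Adj s c := show c ∈ T.neighborSet s from hN ▸ rfl
    exact ⟨hsc.symm, by rw [hN, Set.ncard_singleton]⟩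
  have := (Set.ncard_le_ncard hleaves).trans (hleaf c)
  omega

lemma SimpleGraph.graphJoin_graphDisjUnion_bot_neighborSet_inr_inr {α β γ : Type*}
    (G : SimpleGraph α) (H : SimpleGraph β) (j : γ) :
    (G.graphJoin (H.graphDisjUnion (⊥ : SimpleGraph γ))).neighborSet (Sum.inr (Sum.inr j)) =
      Set.range Sum.inl := by
  ext (a | b | b) <;> simp [graphJoin, graphDisjUnion]

theorem extremal_graph_no_spanning_tree_leaf_degree_general (k n : ℕ) :
    ¬ HasSpanningTreeWithLeafDegLE
      ((⊤ : SimpleGraph (Fin 1)).graphJoin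
      ((⊤ : SimpleGraph (Fin (n - k - 2))).graphDisjUnion (⊥ : SimpleGraph (Fin (k + 1))))) k := by
  let isolated : Fin (k + 1) → Fin 1 ⊕ (Fin (n - k - 2) ⊕ Fin (k + 1)) :=
    fun j ↦ Sum.inr (Sum.inr j)
  have hcard : (Set.range isolated).ncard = k + 1 := by
    rw [Set.ncard_range_of_injective (fun a b h ↦ by simpa [isolated] using h), Nat.card_fin]
  refine not_hasSpanningTreeWithLeafDegLE_of_pendant (Sum.inl 0) (Set.range isolated)
    (by simp [isolated]) ?_ (by omega)
  rintro _ ⟨j, rfl⟩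
  rw [graphJoin_graphDisjUnion_bot_neighborSet_inr_inr, Set.range_unique]
  rfl

/-- The graph `K₁ ∨ (K_(n-k-2) ∪ (k+1)K₁)` has no spanning tree with leaf degree at
most `k`. -/
theorem extremal_graph_no_spanning_tree_leaf_degree (k n : ℕ) (hk : 1 ≤ k) (hnk : k + 2 ≤ n) :
    ¬ HasSpanningTreeWithLeafDegLE
      ((⊤ : SimpleGraph (Fin 1)).graphJoin
      ((⊤ : SimpleGraph (Fin (n - k - 2))).graphDisjUnion (⊥ : SimpleGraph (Fin (k + 1))))) k :=
  extremal_graph_no_spanning_tree_leaf_degree_general k n
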